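/- Let n ≥ 2 and let p₁ < p₂ < ⋯ < pₙ be prime numbers with 5 ≤ p₁. For each j set ξⱼ = i·√(pⱼ(pⱼ − 2)) ∈ ℂ. Then ξₙ does not belong to the field ℚ(ξ₁, …, ξ_{n−1}). -/

import Mathlib

/-!
Adjoining square roots one at a time: if `y² ∈ K` and `x ∈ K(y)` has `x² ∈ K`, write
`x = a + b y`; then `2ab y ∈ K`, so either `y ∈ K` or `ab = 0`, and hence `x ∈ K` or `x y ∈ K`.
Iterating, `ξₙ ∈ ℚ(ξ₁, …, ξₙ₋₁)` would give `ξₙ ∏_{j ∈ T} ξⱼ ∈ ℚ` for some set `T` of indices.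
Squaring, `±pₙ(pₙ - 2) ∏_{j ∈ T} pⱼ(pⱼ - 2)` would be a square in `ℚ`, hence in `ℤ`, but `pₙ`
divides it exactly once.
-/

/-- The complex number ξ_p = i·√(p(p−2)). -/
noncomputable def xi (p : ℕ) : ℂ :=
  Complex.I * (Real.sqrt ((p : ℝ) * ((p : ℝ) - 2)) : ℝ)

open IntermediateField

section SquareRoots

variable {F E : Type*} [Field F] [Field E] [Algebra F E]

theorem exists_eq_add_mul_of_mem_adjoin_simple {y : E} {c : F} (hy : y ^ 2 = algebraMap F E c)
    {x : E} (hx : x ∈ F⟮y⟯) : ∃ a b : F, x = algebraMap F E a + algebraMap F E b * y := by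
  have hyalg : IsAlgebraic F y := IsAlgebraic.of_pow two_pos (hy ▸ isAlgebraic_algebraMap c)
  rw [← mem_toSubalgebra, adjoin_simple_toSubalgebra_of_isAlgebraic hyalg] at hx
  induction hx using Algebra.adjoin_induction with
  | mem z hz => exact ⟨0, 1, by simp [Set.mem_singleton_iff.mp hz]⟩
  | algebraMap a => exact ⟨a, 0, by simp⟩
  | add _ _ _ _ h h' =>
    obtain ⟨a, b, rfl⟩ := h
    obtain ⟨a', b', rfl⟩ := h'
    exact ⟨a + a', b + b', by simp only [map_add]; ring⟩
  | mul _ _ _ _ h h' =>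
    obtain ⟨a, b, rfl⟩ := h
    obtain ⟨a', b', rfl⟩ := h'
    refine ⟨a * a' + b * b' * c, a * b' + b * a', ?_⟩
    simp only [map_add, map_mul]
    linear_combination (algebraMap F E b * algebraMap F E b') * hy

variable [NeZero (2 : E)]

theorem mem_range_or_mul_mem_range_of_mem_adjoin_simple {x y : E}
    (hx : x ^ 2 ∈ Set.range (algebraMap F E)) (hy : y ^ 2 ∈ Set.range (algebraMap F E))
    (hxy : x ∈ F⟮y⟯) :
    x ∈ Set.range (algebraMap F E) ∨ x * y ∈ Set.range (algebraMap F E) := by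
  obtain ⟨c, hc⟩ := hy
  obtain ⟨a, b, rfl⟩ := exists_eq_add_mul_of_mem_adjoin_simple hc.symm hxy
  by_cases hab : a * b = 0
  · rcases mul_eq_zero.mp hab with rfl | rfl
    · exact .inr ⟨b * c, by simp only [map_zero, zero_add, map_mul, hc]; ring⟩
    · exact .inl ⟨a, by simp⟩
  obtain ⟨d, hd⟩ := hx
  have hy : y = algebraMap F E ((d - a ^ 2 - b ^ 2 * c) / (2 * a * b)) := by
    have h2ab : algebraMap F E (2 * a * b) ≠ 0 := by
      rw [mul_assoc, map_mul, map_ofNat]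
      exact mul_ne_zero two_ne_zero ((map_ne_zero _).mpr hab)
    rw [map_div₀, eq_div_iff h2ab]
    simp only [map_sub, map_mul, map_pow, map_ofNat]
    linear_combination -hd + (algebraMap F E b) ^ 2 * hc
  exact .inl ⟨a + b * ((d - a ^ 2 - b ^ 2 * c) / (2 * a * b)), by rw [hy]; simp⟩

theorem exists_mul_prod_mem_range_of_mem_adjoin {S : Finset E}
    (hS : ∀ s ∈ S, s ^ 2 ∈ Set.range (algebraMap F E)) {x : E}
    (hx2 : x ^ 2 ∈ Set.range (algebraMap F E)) (hx : x ∈ adjoin F (S : Set E)) :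
    ∃ T ⊆ S, x * ∏ t ∈ T, t ∈ Set.range (algebraMap F E) := by
  classical
  induction S using Finset.induction_on generalizing x with
  | empty => exact ⟨∅, subset_rfl, by simpa [adjoin_empty, mem_bot] using hx⟩
  | insert y S hyS ih =>
    set K := adjoin F (S : Set E)
    have hrange : Set.range (algebraMap K E) = K := Subtype.range_val
    have hFK : Set.range (algebraMap F E) ⊆ Set.range (algebraMap K E) := by
      rw [hrange]
      rintro _ ⟨c, rfl⟩
      exact K.algebraMap_mem c
    have hS' : ∀ s ∈ S, s ^ 2 ∈ Set.range (algebraMap F E) := fun s hs => hS s (by simp [hs])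
    have hy2 : y ^ 2 ∈ Set.range (algebraMap F E) := hS y (by simp)
    have hxK : x ∈ K⟮y⟯ := by
      rwa [← mem_restrictScalars F, adjoin_adjoin_left, Set.union_singleton, ← Finset.coe_insert]
    rcases mem_range_or_mul_mem_range_of_mem_adjoin_simple (hFK hx2) (hFK hy2) hxK with h | h <;>
      rw [hrange] at h
    · obtain ⟨T, hTS, hT⟩ := ih hS' hx2 h
      exact ⟨T, hTS.trans (Finset.subset_insert y S), hT⟩
    · obtain ⟨a, ha⟩ := hx2
      obtain ⟨b, hb⟩ := hy2
      obtain ⟨T, hTS, hT⟩ := ih hS' ⟨a * b, by rw [map_mul, ha, hb, mul_pow]⟩ h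
      refine ⟨insert y T, Finset.insert_subset_insert y hTS, ?_⟩
      rwa [Finset.prod_insert (fun hy => hyS (hTS hy)), ← mul_assoc]

end SquareRoots

theorem Prime.not_isSquare_mul_of_not_dvd {R : Type*} [CommMonoidWithZero R] [IsCancelMulZero R]
    {q c : R} (hq : Prime q) (hc : ¬q ∣ c) : ¬IsSquare (q * c) := by
  rintro ⟨t, ht⟩
  obtain ⟨s, rfl⟩ := hq.dvd_of_dvd_pow (n := 2) (by rw [sq, ← ht]; exact dvd_mul_right q c)
  have hcs : c = s * (q * s) := mul_left_cancel₀ hq.ne_zero (by rw [ht, mul_assoc])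
  exact hc (hcs ▸ dvd_mul_of_dvd_right (dvd_mul_right q s) s)

theorem exists_sq_prod_eq_intCast_not_dvd {R ι : Type*} [CommRing R] {q : ℤ} (hq : Prime q)
    {s : Finset ι} {f : ι → R} (hf : ∀ i ∈ s, ∃ c : ℤ, ¬q ∣ c ∧ f i ^ 2 = c) :
    ∃ c : ℤ, ¬q ∣ c ∧ (∏ i ∈ s, f i) ^ 2 = c := by
  refine Finset.prod_induction f (fun z => ∃ c : ℤ, ¬q ∣ c ∧ z ^ 2 = c) ?_
    ⟨1, hq.not_dvd_one, by simp⟩ hf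
  rintro x y ⟨c, hc, hxc⟩ ⟨d, hd, hyd⟩
  exact ⟨c * d, fun h => (hq.dvd_or_dvd h).elim hc hd, by rw [mul_pow, hxc, hyd]; push_cast; rfl⟩

theorem xi_sq {p : ℕ} (hp : 2 ≤ p) : xi p ^ 2 = ((-(p * (p - 2)) : ℤ) : ℂ) := by
  have hnonneg : (0 : ℝ) ≤ p * (p - 2) :=
    mul_nonneg (Nat.cast_nonneg p) (sub_nonneg.mpr (by exact_mod_cast hp))
  rw [xi, mul_pow, Complex.I_sq, ← Complex.ofReal_pow, Real.sq_sqrt hnonneg]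
  push_cast
  ring

theorem exists_xi_sq_eq_intCast_not_dvd {a q : ℕ} (hq : Prime (q : ℤ)) (ha : 3 ≤ a)
    (haq : a < q) : ∃ c : ℤ, ¬(q : ℤ) ∣ c ∧ xi a ^ 2 = c := by
  refine ⟨_, ?_, xi_sq (by omega)⟩
  rw [dvd_neg]
  exact fun h => (hq.dvd_or_dvd h).elim (fun h => absurd (Int.le_of_dvd (by omega) h) (by omega))
    (fun h => absurd (Int.le_of_dvd (by omega) h) (by omega))

theorem xi_last_not_mem_adjoin_general (n : ℕ) (p : Fin (n + 1) → ℕ)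
    (hp : ∀ j, (p j).Prime) (hmono : StrictMono p) (h5 : ∀ j, 5 ≤ p j) :
    xi (p (Fin.last n)) ∉
      IntermediateField.adjoin ℚ (Set.range fun j : Fin n => xi (p j.castSucc)) := by
  set q := p (Fin.last n)
  have hq : Prime (q : ℤ) := Nat.prime_iff_prime_int.mp (hp _)
  have hq5 := h5 (Fin.last n)
  have hsq : ∀ j, xi (p j) ^ 2 ∈ Set.range (algebraMap ℚ ℂ) :=
    fun j => ⟨_, by rw [xi_sq (by linarith [h5 j])]; exact map_intCast (algebraMap ℚ ℂ) _⟩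
  intro hmem
  have hfin := Set.finite_range fun j : Fin n => xi (p j.castSucc)
  obtain ⟨T, hTS, r, hr⟩ := exists_mul_prod_mem_range_of_mem_adjoin
    (fun s hs => by obtain ⟨j, rfl⟩ := hfin.mem_toFinset.mp hs; exact hsq _) (hsq _)
    (by rwa [hfin.coe_toFinset])
  obtain ⟨c, hc, hTc⟩ := exists_sq_prod_eq_intCast_not_dvd hq (f := fun t => t) (s := T) (by
    intro t ht
    obtain ⟨j, rfl⟩ := hfin.mem_toFinset.mp (hTS ht)
    exact exists_xi_sq_eq_intCast_not_dvd hq (by linarith [h5 j.castSucc])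
      (hmono (Fin.castSucc_lt_last j)))
  have hqc : ¬(q : ℤ) ∣ -(q - 2) * c := by
    rw [neg_mul, dvd_neg]
    exact fun h => (hq.dvd_or_dvd h).elim
      (fun h => absurd (Int.le_of_dvd (by omega) h) (by omega)) hc
  refine hq.not_isSquare_mul_of_not_dvd hqc (Rat.isSquare_intCast_iff.mp ⟨r, ?_⟩)
  have hr2 : ((r * r : ℚ) : ℂ) = ((q * (-(q - 2) * c) : ℤ) : ℂ) := by
    rw [← eq_ratCast (algebraMap ℚ ℂ), map_mul, hr, ← sq, mul_pow, xi_sq (by omega), hTc]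
    push_cast
    ring
  exact_mod_cast hr2.symm

/-- For primes 5 ≤ p₁ < ⋯ < p_{n+1} (at least two primes), the last number
ξ_{n+1} does not lie in ℚ(ξ₁,…,ξₙ). -/
theorem xi_last_not_mem_adjoin (n : ℕ) (hn : 1 ≤ n) (p : Fin (n + 1) → ℕ)
    (hp : ∀ j, (p j).Prime) (hmono : StrictMono p) (h5 : ∀ j, 5 ≤ p j) :
    xi (p (Fin.last n)) ∉
      IntermediateField.adjoin ℚ (Set.range fun j : Fin n => xi (p j.castSucc)) :=
  xi_last_not_mem_adjoin_general n p hp hmono h5
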